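/- If A is a Killing-Yano tensor of order p on a pseudo-Riemannian manifold, then its second covariant derivative satisfies 2 ∇_a ∇_b A_{c d e₃…e_p} = −(p+1) A_{f[d e₃…e_p} R_{bc]a}{}^f, where the antisymmetrization is over the p+1 indices b, c, d, e₃, …, e_p. -/

import Mathlib

open Finset

/-- The sign of a permutation, as a real number. -/
noncomputable def esign {p : ℕ} (σ : Equiv.Perm (Fin p)) : ℝ :=
  ((Equiv.Perm.sign σ : ℤ) : ℝ)

/-- A rank-`p` tensor (in components) is totally antisymmetric. -/
def IsAlt {ι : Type*} {p : ℕ} (T : (Fin p → ι) → ℝ) : Prop :=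
  ∀ (σ : Equiv.Perm (Fin p)) (v : Fin p → ι), T (v ∘ σ) = esign σ * T v

/-- Antisymmetrization of a rank-`p` tensor (with the `1/p!` factor). -/
noncomputable def alt {ι : Type*} {p : ℕ} (T : (Fin p → ι) → ℝ) : (Fin p → ι) → ℝ :=
  fun v => (Nat.factorial p : ℝ)⁻¹ * ∑ σ : Equiv.Perm (Fin p), esign σ * T (v ∘ σ)

/-- The tensor `g_{a[b₁} h_{b₂…b_{q+1}]}` :
antisymmetrization over the last `q+1` indices of `g_{a b₁} h_{b₂…b_{q+1}}`. -/
noncomputable def ghAlt {ι : Type*} {q : ℕ} (g : ι → ι → ℝ) (h : (Fin q → ι) → ℝ)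
    (a : ι) : (Fin (q + 1) → ι) → ℝ :=
  alt fun v => g a (v 0) * h fun i => v i.succ

/-- View a "derivative" `D : ι → ((Fin p → ι) → ℝ)` as a rank-`(p+1)` tensor. -/
def totalD {ι : Type*} {p : ℕ} (D : ι → (Fin p → ι) → ℝ) : (Fin (p + 1) → ι) → ℝ :=
  fun w => D (w 0) fun i => w i.succ

/-!
Write `∇_a ∇_b A_{c…}` as `X_a(b, c, …)`: by the differentiated Killing–Yano equation it is
alternating in `(b, c, …)`, and the Ricci identity gives its antisymmetric part in `(a, b)`.
As for Killing vectors, combining the Ricci identity for the pairs `(a,b)`, `(b,c)`, `(c,a)`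
with the antisymmetry of `X_a` expresses `2 X_a(b, c, …)` through curvature terms alone.
Antisymmetrizing over `(b, c, …)` (which does not change the left side) and simplifying with the
first Bianchi identity leaves a single curvature term with coefficient `-(p + 1)`.
-/

section Alternation

variable {ι : Type*}

lemma esign_mul {p : ℕ} (σ τ : Equiv.Perm (Fin p)) : esign (σ * τ) = esign σ * esign τ := by
  simp [esign]

lemma esign_mul_self {p : ℕ} (σ : Equiv.Perm (Fin p)) : esign σ * esign σ = 1 := by
  rw [esign, ← Int.cast_mul, ← Units.val_mul, Int.units_mul_self]
  simp

lemma esign_swap {p : ℕ} {x y : Fin p} (h : x ≠ y) : esign (Equiv.swap x y) = -1 := by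
  simp [esign, Equiv.Perm.sign_swap h]

lemma esign_cycleRange {n : ℕ} (i : Fin n) : esign i.cycleRange = (-1) ^ (i : ℕ) := by
  simp [esign, Fin.sign_cycleRange]

lemma esign_cycleRange_symm {n : ℕ} (i : Fin n) : esign i.cycleRange.symm = (-1) ^ (i : ℕ) := by
  rw [← esign_cycleRange]
  simp [esign]

lemma esign_decomposeFin_symm_zero {n : ℕ} (τ : Equiv.Perm (Fin n)) :
    esign (Equiv.Perm.decomposeFin.symm (0, τ)) = esign τ := by
  simp [esign]

lemma comp_decomposeFin_symm_zero {n : ℕ} (u : Fin (n + 1) → ι) (τ : Equiv.Perm (Fin n)) :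
    u ∘ Equiv.Perm.decomposeFin.symm (0, τ) = Fin.cons (u 0) (Fin.tail u ∘ τ) := by
  ext j
  refine Fin.cases ?_ (fun k => ?_) j <;> simp [Fin.tail]

lemma cons_cons_comp_swap_zero_one {n : ℕ} (x y : ι) (z : Fin n → ι) :
    (Fin.cons x (Fin.cons y z) : Fin (n + 2) → ι) ∘ Equiv.swap 0 1
      = Fin.cons y (Fin.cons x z) := by
  ext j
  refine Fin.cases ?_ (Fin.cases ?_ (fun k => ?_)) j
  · simp
  · simp
  · rw [Function.comp_apply, Equiv.swap_apply_of_ne_of_ne (Fin.succ_ne_zero _)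
      (by rw [← Fin.succ_zero_eq_one, Ne, Fin.succ_inj]; exact Fin.succ_ne_zero k)]
    simp

lemma removeNth_succ_cons {n : ℕ} (k : Fin (n + 1)) (c : ι) (z : Fin (n + 1) → ι) :
    Fin.removeNth k.succ (Fin.cons c z : Fin (n + 2) → ι) = Fin.cons c (Fin.removeNth k z) := by
  ext j
  refine Fin.cases ?_ (fun i => ?_) j <;> simp [Fin.removeNth_apply, Fin.succ_succAbove_succ]

variable {p : ℕ}

lemma alt_add (S T : (Fin p → ι) → ℝ) (v : Fin p → ι) :
    alt (fun u => S u + T u) v = alt S v + alt T v := by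
  simp only [alt, mul_add, sum_add_distrib]

lemma alt_sub (S T : (Fin p → ι) → ℝ) (v : Fin p → ι) :
    alt (fun u => S u - T u) v = alt S v - alt T v := by
  simp only [alt, mul_sub, sum_sub_distrib]

lemma alt_const_mul (c : ℝ) (T : (Fin p → ι) → ℝ) (v : Fin p → ι) :
    alt (fun u => c * T u) v = c * alt T v := by
  simp only [alt, mul_sum]
  exact sum_congr rfl fun σ _ => by ring

lemma alt_zero (v : Fin p → ι) : alt (fun _ => 0) v = 0 := by
  simp [alt]

lemma alt_sum {κ : Type*} (s : Finset κ) (T : κ → (Fin p → ι) → ℝ) (v : Fin p → ι) :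
    alt (fun u => ∑ k ∈ s, T k u) v = ∑ k ∈ s, alt (T k) v := by
  simp only [alt, mul_sum]
  exact sum_comm

lemma alt_comp_perm (T : (Fin p → ι) → ℝ) (σ : Equiv.Perm (Fin p)) (v : Fin p → ι) :
    alt (fun u => T (u ∘ σ)) v = esign σ * alt T v := by
  rw [alt, alt, mul_left_comm (esign σ), mul_sum _ _ (esign σ)]
  congr 1
  exact Fintype.sum_equiv (Equiv.mulRight σ) _ _ fun τ => by
    rw [Equiv.coe_mulRight, esign_mul, Equiv.Perm.coe_mul, ← Function.comp_assoc]
    linear_combination -esign τ * T ((v ∘ τ) ∘ σ) * esign_mul_self σ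

lemma isAlt_alt (T : (Fin p → ι) → ℝ) : IsAlt (alt T) := by
  intro σ v
  rw [alt, alt, mul_left_comm (esign σ), mul_sum _ _ (esign σ)]
  congr 1
  exact Fintype.sum_equiv (Equiv.mulLeft σ) _ _ fun τ => by
    rw [Equiv.coe_mulLeft, esign_mul, Equiv.Perm.coe_mul, ← Function.comp_assoc]
    linear_combination -esign τ * T ((v ∘ σ) ∘ τ) * esign_mul_self σ

lemma isAlt_of_forall_eq_alt {T : (Fin p → ι) → ℝ} (h : ∀ v, T v = alt T v) : IsAlt T := by
  intro σ v
  rw [h (v ∘ σ), h v]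
  exact isAlt_alt T σ v

lemma IsAlt.apply_update [DecidableEq ι] {n : ℕ} {T : (Fin (n + 1) → ι) → ℝ}
    (hT : IsAlt T) (v : Fin (n + 1) → ι) (i : Fin (n + 1)) (x : ι) :
    T (Function.update v i x) = (-1) ^ (i : ℕ) * T (Fin.cons x (Fin.removeNth i v)) := by
  rw [← Fin.insertNth_removeNth, ← Fin.cons_comp_cycleRange, hT, esign_cycleRange]

lemma IsAlt.apply_cons_cons {n : ℕ} {T : (Fin (n + 2) → ι) → ℝ} (hT : IsAlt T)
    (x y : ι) (z : Fin n → ι) :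
    T (Fin.cons x (Fin.cons y z)) = -T (Fin.cons y (Fin.cons x z)) := by
  rw [← cons_cons_comp_swap_zero_one, hT, esign_swap zero_ne_one, neg_one_mul]

lemma alt_cons_removeNth {n : ℕ} (T : (Fin (n + 1) → ι) → ℝ) (i : Fin (n + 1))
    (v : Fin (n + 1) → ι) :
    alt (fun u => T (Fin.cons (u i) (Fin.removeNth i u))) v = (-1) ^ (i : ℕ) * alt T v := by
  simp only [Fin.cons_removeNth_eq_comp_cycleRange_symm]
  rw [alt_comp_perm, esign_cycleRange_symm]

lemma alt_alt_tail {n : ℕ} (F : ι → (Fin n → ι) → ℝ) (v : Fin (n + 1) → ι) :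
    alt (fun u => alt (F (u 0)) (Fin.tail u)) v = alt (fun u => F (u 0) (Fin.tail u)) v := by
  have hlift : ∀ τ : Equiv.Perm (Fin n),
      alt (fun u => F (u 0) (Fin.tail u ∘ τ)) v
        = esign τ * alt (fun u => F (u 0) (Fin.tail u)) v := by
    intro τ
    have h := alt_comp_perm (fun u => F (u 0) (Fin.tail u)) (Equiv.Perm.decomposeFin.symm (0, τ)) v
    simpa only [comp_decomposeFin_symm_zero, Fin.cons_zero, Fin.tail_cons,
      esign_decomposeFin_symm_zero] using h
  change alt (fun u => (n.factorial : ℝ)⁻¹ *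
    ∑ τ : Equiv.Perm (Fin n), esign τ * F (u 0) (Fin.tail u ∘ τ)) v = _
  rw [alt_const_mul, alt_sum]
  simp only [alt_const_mul, hlift, ← mul_assoc, esign_mul_self, one_mul]
  rw [sum_const, card_univ, Fintype.card_perm, Fintype.card_fin, nsmul_eq_mul, ← mul_assoc,
    inv_mul_cancel₀ (by positivity), one_mul]

lemma alt_head_tail_congr {n : ℕ} {F F' : ι → (Fin n → ι) → ℝ}
    (h : ∀ x w, alt (F x) w = alt (F' x) w) (v : Fin (n + 1) → ι) :
    alt (fun u => F (u 0) (Fin.tail u)) v = alt (fun u => F' (u 0) (Fin.tail u)) v := by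
  simp only [← alt_alt_tail, h]

lemma alt_head_head_tail_congr {n : ℕ} {H H' : ι → ι → (Fin n → ι) → ℝ}
    (h : ∀ x y w, alt (H x y) w = alt (H' x y) w) (v : Fin (n + 2) → ι) :
    alt (fun u => H (u 0) (Fin.tail u 0) (Fin.tail (Fin.tail u))) v
      = alt (fun u => H' (u 0) (Fin.tail u 0) (Fin.tail (Fin.tail u))) v :=
  alt_head_tail_congr (F := fun x w => H x (w 0) (Fin.tail w))
    (F' := fun x w => H' x (w 0) (Fin.tail w)) (fun x => alt_head_tail_congr (h x)) v

end Alternation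

lemma two_mul_eq_of_antisymm_of_sub_eq {ι : Type*} {n : ℕ}
    {X G : ι → ι → (Fin (n + 1) → ι) → ℝ}
    (hX : ∀ α x y z, X α x (Fin.cons y z) = -X α y (Fin.cons x z))
    (hG : ∀ α β v, X α β v - X β α v = G α β v) (a b : ι) (v : Fin (n + 1) → ι) :
    2 * X a b v
      = G a b v - G b (v 0) (Fin.cons a (Fin.tail v)) + G (v 0) a (Fin.cons b (Fin.tail v)) := by
  refine Fin.consCases (fun c w => ?_) v
  simp only [Fin.cons_zero, Fin.tail_cons]
  linarith [hG a b (Fin.cons c w), hG b c (Fin.cons a w), hG c a (Fin.cons b w),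
    hX b a c w, hX c b a w, hX a c b w]

section Curvature

variable {ι : Type*} [Fintype ι]

noncomputable def raiseLast (Riem : ι → ι → ι → ι → ℝ) (ginv : ι → ι → ℝ) :
    ι → ι → ι → ι → ℝ :=
  fun α β γ f => ∑ e, Riem α β γ e * ginv e f

lemma sum_sum_mul_eq_sum_raiseLast_mul (Riem : ι → ι → ι → ι → ℝ) (ginv : ι → ι → ℝ)
    (α β γ : ι) (X : ι → ℝ) :
    ∑ e, ∑ f, Riem α β γ e * ginv e f * X f
      = ∑ f, raiseLast Riem ginv α β γ f * X f := by
  rw [sum_comm]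
  simp only [raiseLast, sum_mul]

lemma raiseLast_antisymm {Riem : ι → ι → ι → ι → ℝ} (ginv : ι → ι → ℝ)
    (h : ∀ a b c d, Riem a b c d = -Riem b a c d) (a b c d : ι) :
    raiseLast Riem ginv a b c d = -raiseLast Riem ginv b a c d := by
  simp only [raiseLast, h a b, neg_mul, sum_neg_distrib]

lemma raiseLast_bianchi {Riem : ι → ι → ι → ι → ℝ} (ginv : ι → ι → ℝ)
    (h : ∀ a b c d, Riem a b c d + Riem b c a d + Riem c a b d = 0) (a b c d : ι) :
    raiseLast Riem ginv a b c d + raiseLast Riem ginv b c a d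
      + raiseLast Riem ginv c a b d = 0 := by
  simp only [raiseLast, ← sum_add_distrib, ← add_mul, h, zero_mul, sum_const_zero]

variable (R : ι → ι → ι → ι → ℝ)

noncomputable def curvContract {n : ℕ} (A : (Fin (n + 1) → ι) → ℝ) (α β γ : ι)
    (z : Fin n → ι) : ℝ :=
  ∑ f, R α β γ f * A (Fin.cons f z)

noncomputable def ricciAction [DecidableEq ι] {n : ℕ} (A : (Fin n → ι) → ℝ) (α β : ι)
    (v : Fin n → ι) : ℝ :=
  ∑ i, ∑ f, R α β (v i) f * A (Function.update v i f)

variable {R}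

lemma ricciAction_swap [DecidableEq ι] {n : ℕ} (hR : ∀ a b c d, R a b c d = -R b a c d)
    (A : (Fin n → ι) → ℝ) (α β : ι) (v : Fin n → ι) :
    ricciAction R A β α v = -ricciAction R A α β v := by
  simp only [ricciAction, hR β α, neg_mul, sum_neg_distrib]

lemma ricciAction_eq_sum [DecidableEq ι] {n : ℕ} {A : (Fin (n + 1) → ι) → ℝ}
    (hA : IsAlt A) (α β : ι) (v : Fin (n + 1) → ι) :
    ricciAction R A α β v = ∑ i : Fin (n + 1),
      (-1) ^ (i : ℕ) * curvContract R A α β (v i) (Fin.removeNth i v) := by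
  simp only [ricciAction, curvContract, hA.apply_update, mul_sum]
  exact sum_congr rfl fun i _ => sum_congr rfl fun f _ => by ring

lemma alt_ricciAction [DecidableEq ι] {n : ℕ} {A : (Fin (n + 1) → ι) → ℝ} (hA : IsAlt A)
    (α β : ι) (v : Fin (n + 1) → ι) :
    alt (ricciAction R A α β) v
      = ((n : ℝ) + 1) * alt (fun w => curvContract R A α β (w 0) (Fin.tail w)) v := by
  have hterm : ∀ i : Fin (n + 1),
      alt (fun w => (-1) ^ (i : ℕ) * curvContract R A α β (w i) (Fin.removeNth i w)) v
        = alt (fun w => curvContract R A α β (w 0) (Fin.tail w)) v := by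
    intro i
    have h := alt_cons_removeNth (fun w => curvContract R A α β (w 0) (Fin.tail w)) i v
    simp only [Fin.cons_zero, Fin.tail_cons] at h
    rw [alt_const_mul, h, ← mul_assoc, ← mul_pow]
    norm_num
  simp only [funext (ricciAction_eq_sum hA α β), alt_sum, hterm, sum_const, card_univ,
    Fintype.card_fin, nsmul_eq_mul]
  push_cast
  ring

lemma alt_ricciAction_cons [DecidableEq ι] {n : ℕ} {A : (Fin (n + 2) → ι) → ℝ}
    (hA : IsAlt A) (α β c : ι) (w : Fin (n + 1) → ι) :
    alt (fun z => ricciAction R A α β (Fin.cons c z)) w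
      = alt (fun z => curvContract R A α β c z
          - ((n : ℝ) + 1) * curvContract R A α β (z 0) (Fin.cons c (Fin.tail z))) w := by
  have hterm : ∀ k : Fin (n + 1),
      alt (fun z => (-1) ^ ((k : ℕ) + 1)
          * curvContract R A α β (z k) (Fin.cons c (Fin.removeNth k z))) w
        = -alt (fun z => curvContract R A α β (z 0) (Fin.cons c (Fin.tail z))) w := by
    intro k
    have h := alt_cons_removeNth
      (fun z => curvContract R A α β (z 0) (Fin.cons c (Fin.tail z))) k w
    simp only [Fin.cons_zero, Fin.tail_cons] at h
    rw [alt_const_mul, h, ← mul_assoc, ← pow_add, add_right_comm, ← two_mul, pow_succ,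
      pow_mul]
    norm_num
  simp only [ricciAction_eq_sum hA, Fin.sum_univ_succ (n := n + 1), Fin.cons_zero,
    Fin.removeNth_zero, Fin.tail_cons, Fin.cons_succ, removeNth_succ_cons, Fin.val_zero, pow_zero,
    one_mul, Fin.val_succ]
  rw [alt_add, alt_sum, alt_sub, alt_const_mul]
  simp only [hterm, sum_const, card_univ, Fintype.card_fin, nsmul_eq_mul]
  push_cast
  ring

variable {n : ℕ} {A : (Fin (n + 2) → ι) → ℝ}

lemma two_mul_alt_curvContract (hR : ∀ a b c d, R a b c d = -R b a c d)
    (hB : ∀ a b c d, R a b c d + R b c a d + R c a b d = 0) (a : ι) (w : Fin (n + 3) → ι) :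
    2 * alt (fun u => curvContract R A a (u 0) (Fin.tail u 0) (Fin.tail (Fin.tail u))) w
      = -alt (fun u => curvContract R A (u 0) (Fin.tail u 0) a (Fin.tail (Fin.tail u))) w := by
  set P := fun u : Fin (n + 3) → ι =>
    curvContract R A a (u 0) (Fin.tail u 0) (Fin.tail (Fin.tail u))
  set B := fun u : Fin (n + 3) → ι =>
    curvContract R A (u 0) (Fin.tail u 0) a (Fin.tail (Fin.tail u))
  have hbianchi : ∀ u, B u - P (u ∘ Equiv.swap 0 1) + P u = 0 := by
    intro u
    refine Fin.consCases (fun x u' => Fin.consCases (fun y z => ?_) u') u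
    simp only [B, P, curvContract, cons_cons_comp_swap_zero_one, Fin.cons_zero, Fin.tail_cons,
      ← sum_sub_distrib, ← sum_add_distrib]
    refine sum_eq_zero fun f _ => ?_
    linear_combination A (Fin.cons f z) * (hB x y a f - hR y a x f)
  have h := congrArg (alt · w) (funext hbianchi)
  simp only [alt_add, alt_sub, alt_comp_perm, esign_swap zero_ne_one, alt_zero] at h
  linarith

lemma alt_curvContract_cons_eq_zero (hR : ∀ a b c d, R a b c d = -R b a c d)
    (hB : ∀ a b c d, R a b c d + R b c a d + R c a b d = 0) (a : ι) (w : Fin (n + 3) → ι) :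
    alt (fun u => curvContract R A (u 0) (Fin.tail u 0) (Fin.tail (Fin.tail u) 0)
      (Fin.cons a (Fin.tail (Fin.tail (Fin.tail u))))) w = 0 := by
  set C := fun u : Fin (n + 3) → ι => curvContract R A (u 0) (Fin.tail u 0)
    (Fin.tail (Fin.tail u) 0) (Fin.cons a (Fin.tail (Fin.tail (Fin.tail u))))
  set swap₁₂ : Equiv.Perm (Fin (n + 3)) := Equiv.Perm.decomposeFin.symm (0, Equiv.swap 0 1)
  -- `swap 0 1 * swap₁₂` rotates the first three slots, and `C (u ∘ swap₁₂)` is minus the third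
  -- term of the cyclic Bianchi sum.
  have hbianchi : ∀ u,
      C u + C (u ∘ ⇑(Equiv.swap (0 : Fin (n + 3)) 1 * swap₁₂)) - C (u ∘ swap₁₂) = 0 := by
    intro u
    refine Fin.consCases (fun x u' => Fin.consCases (fun y u'' =>
      Fin.consCases (fun z v => ?_) u'') u') u
    simp only [C, Equiv.Perm.coe_mul, ← Function.comp_assoc, cons_cons_comp_swap_zero_one]
    simp only [swap₁₂, curvContract, comp_decomposeFin_symm_zero, cons_cons_comp_swap_zero_one,
      Fin.cons_zero, Fin.tail_cons, ← sum_add_distrib, ← sum_sub_distrib]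
    refine sum_eq_zero fun f _ => ?_
    linear_combination A (Fin.cons f (Fin.cons a v)) * (hB x y z f - hR z x y f)
  have h := congrArg (alt · w) (funext hbianchi)
  simp only [alt_add, alt_sub, alt_comp_perm, esign_mul, esign_decomposeFin_symm_zero,
    esign_swap zero_ne_one, alt_zero, swap₁₂] at h
  linarith

lemma alt_cyclic_ricciAction [DecidableEq ι] (hA : IsAlt A)
    (hR : ∀ a b c d, R a b c d = -R b a c d)
    (hB : ∀ a b c d, R a b c d + R b c a d + R c a b d = 0) (a : ι) (w : Fin (n + 3) → ι) :
    alt (fun u => ricciAction R A a (u 0) (Fin.tail u)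
        - ricciAction R A (u 0) (Fin.tail u 0) (Fin.cons a (Fin.tail (Fin.tail u)))
        + ricciAction R A (Fin.tail u 0) a (Fin.cons (u 0) (Fin.tail (Fin.tail u)))) w
      = -((n : ℝ) + 3)
          * alt (fun u => curvContract R A (u 0) (Fin.tail u 0) a (Fin.tail (Fin.tail u))) w := by
  have h₁ : alt (fun u => ricciAction R A a (u 0) (Fin.tail u)) w = ((n : ℝ) + 2)
      * alt (fun u => curvContract R A a (u 0) (Fin.tail u 0) (Fin.tail (Fin.tail u))) w := by
    refine (alt_head_tail_congr (F' := fun x v => ((n : ℝ) + 2)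
      * curvContract R A a x (v 0) (Fin.tail v)) (fun x v => ?_) w).trans (alt_const_mul _ _ w)
    rw [alt_ricciAction hA, alt_const_mul]
    push_cast
    ring
  have h₂ : alt (fun u => ricciAction R A (u 0) (Fin.tail u 0)
        (Fin.cons a (Fin.tail (Fin.tail u)))) w
      = alt (fun u => curvContract R A (u 0) (Fin.tail u 0) a (Fin.tail (Fin.tail u))) w := by
    refine (alt_head_head_tail_congr (H := fun x y z => ricciAction R A x y (Fin.cons a z))
      (fun x y z => alt_ricciAction_cons hA x y a z) w).trans ?_
    rw [alt_sub, alt_const_mul, alt_curvContract_cons_eq_zero hR hB, mul_zero, sub_zero]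
  have h₃ : alt (fun u => ricciAction R A (Fin.tail u 0) a
        (Fin.cons (u 0) (Fin.tail (Fin.tail u)))) w
      = alt (fun u => ricciAction R A a (u 0) (Fin.tail u)) w := by
    have hswap : ∀ u : Fin (n + 3) → ι,
        ricciAction R A (Fin.tail u 0) a (Fin.cons (u 0) (Fin.tail (Fin.tail u)))
          = -1 * ricciAction R A a ((u ∘ Equiv.swap 0 1) 0)
              (Fin.tail (u ∘ Equiv.swap 0 1)) := by
      intro u
      refine Fin.consCases (fun x u' => Fin.consCases (fun y z => ?_) u') u
      simp only [cons_cons_comp_swap_zero_one, Fin.cons_zero, Fin.tail_cons,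
        ricciAction_swap hR _ a, neg_one_mul]
    simp only [hswap, alt_const_mul,
      alt_comp_perm (fun u => ricciAction R A a (u 0) (Fin.tail u)), esign_swap zero_ne_one]
    ring
  rw [alt_add, alt_sub, h₁, h₂, h₃, h₁]
  linear_combination ((n : ℝ) + 2) * two_mul_alt_curvContract hR hB a w

end Curvature

/-- Here `p = r + 2`, and `DDA a b v` stands for `∇_a ∇_b A_v`. -/
theorem statement12_general {ι : Type*} [Fintype ι] [DecidableEq ι] {r : ℕ}
    (ginv : ι → ι → ℝ)
    (A : (Fin (r + 2) → ι) → ℝ) (hAalt : IsAlt A)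
    (DDA : ι → ι → (Fin (r + 2) → ι) → ℝ)
    (hDKY : ∀ (a b : ι) (v : Fin (r + 2) → ι),
      DDA a b v = alt (totalD (DDA a)) (Fin.cons b v))
    (Riem : ι → ι → ι → ι → ℝ)
    (hRicciId : ∀ (a b : ι) (v : Fin (r + 2) → ι),
      DDA a b v - DDA b a v
        = ∑ i : Fin (r + 2), ∑ e, ∑ f,
            Riem a b (v i) e * ginv e f * A (Function.update v i f))
    (hRiemAsym₁ : ∀ a b c d, Riem a b c d = -Riem b a c d)
    (hBianchi : ∀ a b c d, Riem a b c d + Riem b c a d + Riem c a b d = 0) :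
    ∀ (a b : ι) (v : Fin (r + 2) → ι),
      2 * DDA a b v
        = -((r : ℝ) + 3) *
            alt (fun w : Fin (r + 3) → ι =>
              ∑ e, ∑ f, Riem (w 0) (w 1) a e * ginv e f *
                A (Fin.cons f fun i : Fin (r + 1) => w i.succ.succ))
              (Fin.cons b v) := by
  intro a b v
  set R := raiseLast Riem ginv
  have hRicci : ∀ α β v, DDA α β v - DDA β α v = ricciAction R A α β v := fun α β v => by
    simp only [hRicciId, ricciAction, R, sum_sum_mul_eq_sum_raiseLast_mul]
  have hDDA : ∀ α, IsAlt (totalD (DDA α)) := fun α =>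
    isAlt_of_forall_eq_alt fun u => by
      rw [← Fin.cons_self_tail u]
      exact hDKY α (u 0) (Fin.tail u)
  calc 2 * DDA a b v = alt (fun u => 2 * DDA a (u 0) (Fin.tail u)) (Fin.cons b v) := by
        rw [alt_const_mul, hDKY a b v]
        rfl
    _ = alt (fun u => ricciAction R A a (u 0) (Fin.tail u)
          - ricciAction R A (u 0) (Fin.tail u 0) (Fin.cons a (Fin.tail (Fin.tail u)))
          + ricciAction R A (Fin.tail u 0) a (Fin.cons (u 0) (Fin.tail (Fin.tail u))))
          (Fin.cons b v) := by
        congr 1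
        funext u
        exact two_mul_eq_of_antisymm_of_sub_eq (fun α => (hDDA α).apply_cons_cons) hRicci a _ _
    _ = -((r : ℝ) + 3) * alt (fun u => curvContract R A (u 0) (Fin.tail u 0) a
          (Fin.tail (Fin.tail u))) (Fin.cons b v) :=
        alt_cyclic_ricciAction hAalt (raiseLast_antisymm ginv hRiemAsym₁)
          (raiseLast_bianchi ginv hBianchi) a _
    _ = _ := by
        congr 2
        funext u
        simp only [curvContract, R, sum_sum_mul_eq_sum_raiseLast_mul, Fin.tail,
          Fin.succ_zero_eq_one]
        rfl

/-- If `A` is a Killing–Yano tensor of order `p = r+2` (its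
covariant derivative `D = ∇A` is totally antisymmetric), then with `DDA = ∇∇A`
subject to the Ricci identity and to the differentiated KY equation, the second
derivative satisfies
`2 ∇_a ∇_b A_{c d e₃…e_p} = −(p+1) A_{f[d e₃…e_p} R_{bc]a}{}^f`,
the antisymmetrization being over the `p+1` indices `b, c, d, e₃, …, e_p`. -/
theorem statement12 {ι : Type*} [Fintype ι] [DecidableEq ι] {r : ℕ}
    (g ginv : ι → ι → ℝ)
    (hgsymm : ∀ a b, g a b = g b a) (hginvsymm : ∀ a b, ginv a b = ginv b a)
    (hinv : ∀ a b, ∑ c, ginv a c * g c b = if a = b then (1 : ℝ) else 0)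
    (A : (Fin (r + 2) → ι) → ℝ) (hAalt : IsAlt A)
    (D : ι → (Fin (r + 2) → ι) → ℝ) (hDalt : ∀ a, IsAlt (D a))
    (hKY : ∀ (a : ι) (v : Fin (r + 2) → ι), D a v = alt (totalD D) (Fin.cons a v))
    (DDA : ι → ι → (Fin (r + 2) → ι) → ℝ)
    (hDKY : ∀ (a b : ι) (v : Fin (r + 2) → ι),
      DDA a b v = alt (totalD (DDA a)) (Fin.cons b v))
    (Riem : ι → ι → ι → ι → ℝ)
    (hRicciId : ∀ (a b : ι) (v : Fin (r + 2) → ι),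
      DDA a b v - DDA b a v
        = ∑ i : Fin (r + 2), ∑ e, ∑ f,
            Riem a b (v i) e * ginv e f * A (Function.update v i f))
    (hRiemAsym₁ : ∀ a b c d, Riem a b c d = -Riem b a c d)
    (hRiemAsym₂ : ∀ a b c d, Riem a b c d = -Riem a b d c)
    (hRiemPair : ∀ a b c d, Riem a b c d = Riem c d a b)
    (hBianchi : ∀ a b c d, Riem a b c d + Riem b c a d + Riem c a b d = 0) :
    ∀ (a b : ι) (v : Fin (r + 2) → ι),
      2 * DDA a b v
        = -((r : ℝ) + 3) *
            alt (fun w : Fin (r + 3) → ι =>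
              ∑ e, ∑ f, Riem (w 0) (w 1) a e * ginv e f *
                A (Fin.cons f fun i : Fin (r + 1) => w i.succ.succ))
              (Fin.cons b v) :=
  statement12_general ginv A hAalt DDA hDKY Riem hRicciId hRiemAsym₁ hBianchi
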